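/- arXiv:math/9508213 — 3 statements merged into one kernel-verified Lean document; each statement's English description precedes it below -/
import Mathlib

section
/- (Chebyshev-type integral inequality.) Let f₁, f₂, g₁, g₂ : [0, α] → ℝ be integrable with f₁ ≥ 0 nonincreasing, f₂ ≥ 0 nondecreasing, g₁ ≥ 0 nonincreasing, g₂ ≥ 0 nondecreasing, and suppose ∫₀^α g₁ = ∫₀^α g₂. Then ∫₀^α f₁·(g₁ − g₂) ≥ 0 and ∫₀^α f₂·(g₁ − g₂) ≤ 0; consequently ∫₀^α f₁g₁ · ∫₀^α f₂g₂ ≥ ∫₀^α f₁g₂ · ∫₀^α f₂g₁. -/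
/-!
Put `h = g₁ - g₂`: it is nonincreasing with `∫₀^α h = 0`, so there is a cut point `c` with
`h ≥ 0` before `c` and `h ≤ 0` after it. For nonincreasing `f` this gives `f c · h ≤ f · h`
pointwise, and integrating yields `0 = f c ∫ h ≤ ∫ f h`; for nondecreasing `f` apply this to `-f`.
The product inequality follows by multiplying `∫ f₁g₂ ≤ ∫ f₁g₁` and `∫ f₂g₁ ≤ ∫ f₂g₂`.
-/

open MeasureTheory Set

theorem AntitoneOn.exists_sign_change {α β : Type*}
    [ConditionallyCompleteLinearOrder α] [LinearOrder β] [Zero β] {h : α → β} {a b : α}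
    (hab : a ≤ b) (hh : AntitoneOn h (Icc a b)) :
    ∃ c ∈ Icc a b, ∀ x ∈ Icc a b, (x < c → 0 ≤ h x) ∧ (c < x → h x ≤ 0) := by
  set S := insert a {x ∈ Icc a b | 0 ≤ h x}
  have hS : S.Nonempty := insert_nonempty _ _
  have hSb : ∀ y ∈ S, y ≤ b := by
    rintro y (rfl | hy)
    exacts [hab, hy.1.2]
  have hbdd : BddAbove S := ⟨b, hSb⟩
  refine ⟨sSup S, ⟨le_csSup hbdd (mem_insert a _), csSup_le hS hSb⟩, fun x hx => ⟨?_, ?_⟩⟩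
  · intro hxc
    obtain ⟨y, hy, hxy⟩ := exists_lt_of_lt_csSup hS hxc
    rcases hy with rfl | hy
    · exact absurd hx.1 (not_le.2 hxy)
    · exact hy.2.trans (hh hx hy.1 hxy.le)
  · intro hcx
    by_contra! hpos
    exact not_le.2 hcx (le_csSup hbdd (mem_insert_of_mem a ⟨hx, hpos.le⟩))

section Integral

variable {μ : Measure ℝ} [IsLocallyFiniteMeasure μ] {f g h : ℝ → ℝ} {a b : ℝ}

theorem MonotoneOn.intervalIntegrable_mul (hf : MonotoneOn f (Icc a b)) (hab : a ≤ b)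
    (hg : IntervalIntegrable g μ a b) : IntervalIntegrable (fun x => f x * g x) μ a b := by
  have hfi : IntervalIntegrable f μ a b := (hf.mono (uIcc_of_le hab).subset).intervalIntegrable
  rw [intervalIntegrable_iff_integrableOn_Ioc_of_le hab] at hg hfi ⊢
  refine hg.bdd_mul (c := max |f a| |f b|) hfi.aestronglyMeasurable ?_
  refine ae_restrict_of_forall_mem measurableSet_Ioc fun x hx => ?_
  have hx' := Ioc_subset_Icc_self hx
  exact abs_le_max_abs_abs (hf ⟨le_rfl, hab⟩ hx' hx'.1) (hf hx' ⟨hab, le_rfl⟩ hx'.2)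

theorem AntitoneOn.intervalIntegrable_mul (hf : AntitoneOn f (Icc a b)) (hab : a ≤ b)
    (hg : IntervalIntegrable g μ a b) : IntervalIntegrable (fun x => f x * g x) μ a b := by
  simpa [Pi.neg_def] using (hf.neg.intervalIntegrable_mul hab hg).neg

theorem AntitoneOn.integral_mul_nonneg (hf : AntitoneOn f (Icc a b))
    (hh : AntitoneOn h (Icc a b)) (hab : a ≤ b) (hint : ∫ x in a..b, h x ∂μ = 0) :
    0 ≤ ∫ x in a..b, f x * h x ∂μ := by
  obtain ⟨c, hc, hsign⟩ := hh.exists_sign_change hab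
  have hhi : IntervalIntegrable h μ a b := (hh.mono (uIcc_of_le hab).subset).intervalIntegrable
  have hpt : ∀ x ∈ Icc a b, f c * h x ≤ f x * h x := by
    intro x hx
    rcases lt_trichotomy x c with hxc | rfl | hcx
    · exact mul_le_mul_of_nonneg_right (hf hx hc hxc.le) ((hsign x hx).1 hxc)
    · exact le_rfl
    · exact mul_le_mul_of_nonpos_right (hf hc hx hcx.le) ((hsign x hx).2 hcx)
  calc (0 : ℝ) = ∫ x in a..b, f c * h x ∂μ := by
        rw [intervalIntegral.integral_const_mul, hint, mul_zero]
    _ ≤ ∫ x in a..b, f x * h x ∂μ := intervalIntegral.integral_mono_on hab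
        (hhi.const_mul _) (hf.intervalIntegrable_mul hab hhi) hpt

theorem MonotoneOn.integral_mul_nonpos (hf : MonotoneOn f (Icc a b))
    (hh : AntitoneOn h (Icc a b)) (hab : a ≤ b) (hint : ∫ x in a..b, h x ∂μ = 0) :
    ∫ x in a..b, f x * h x ∂μ ≤ 0 := by
  have := hf.neg.integral_mul_nonneg hh hab hint
  simp only [neg_mul, intervalIntegral.integral_neg] at this
  linarith

end Integral

theorem chebyshev_type_inequality_general (α : ℝ) (hα : 0 < α) (f₁ f₂ g₁ g₂ : ℝ → ℝ)
    (hf₁0 : ∀ x ∈ Set.Icc 0 α, 0 ≤ f₁ x) (hf₂0 : ∀ x ∈ Set.Icc 0 α, 0 ≤ f₂ x)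
    (hg₂0 : ∀ x ∈ Set.Icc 0 α, 0 ≤ g₂ x)
    (hf₁m : AntitoneOn f₁ (Set.Icc 0 α)) (hf₂m : MonotoneOn f₂ (Set.Icc 0 α))
    (hg₁m : AntitoneOn g₁ (Set.Icc 0 α)) (hg₂m : MonotoneOn g₂ (Set.Icc 0 α))
    (heq : ∫ x in (0:ℝ)..α, g₁ x = ∫ x in (0:ℝ)..α, g₂ x) :
    0 ≤ (∫ x in (0:ℝ)..α, f₁ x * (g₁ x - g₂ x)) ∧
      (∫ x in (0:ℝ)..α, f₂ x * (g₁ x - g₂ x)) ≤ 0 ∧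
      (∫ x in (0:ℝ)..α, f₁ x * g₂ x) * (∫ x in (0:ℝ)..α, f₂ x * g₁ x) ≤
        (∫ x in (0:ℝ)..α, f₁ x * g₁ x) * (∫ x in (0:ℝ)..α, f₂ x * g₂ x) := by
  have hg₁i : IntervalIntegrable g₁ volume 0 α :=
    (hg₁m.mono (uIcc_of_le hα.le).subset).intervalIntegrable
  have hg₂i : IntervalIntegrable g₂ volume 0 α :=
    (hg₂m.mono (uIcc_of_le hα.le).subset).intervalIntegrable
  have hh : AntitoneOn (fun x => g₁ x - g₂ x) (Icc 0 α) := fun x hx y hy hxy =>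
    sub_le_sub (hg₁m hx hy hxy) (hg₂m hx hy hxy)
  have hint : ∫ x in (0:ℝ)..α, (g₁ x - g₂ x) = 0 := by
    rw [intervalIntegral.integral_sub hg₁i hg₂i, heq, sub_self]
  have h₁ := hf₁m.integral_mul_nonneg hh hα.le hint
  have h₂ := hf₂m.integral_mul_nonpos hh hα.le hint
  refine ⟨h₁, h₂, ?_⟩
  simp only [mul_sub] at h₁ h₂
  rw [intervalIntegral.integral_sub (hf₁m.intervalIntegrable_mul hα.le hg₁i)
    (hf₁m.intervalIntegrable_mul hα.le hg₂i)] at h₁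
  rw [intervalIntegral.integral_sub (hf₂m.intervalIntegrable_mul hα.le hg₁i)
    (hf₂m.intervalIntegrable_mul hα.le hg₂i)] at h₂
  exact mul_le_mul_of_nonneg (by linarith) (by linarith)
    (intervalIntegral.integral_nonneg hα.le fun x hx => mul_nonneg (hf₁0 x hx) (hg₂0 x hx))
    (intervalIntegral.integral_nonneg hα.le fun x hx => mul_nonneg (hf₂0 x hx) (hg₂0 x hx))

/-- Chebyshev-type integral inequality: if `f₁, g₁ ≥ 0` are nonincreasing, `f₂, g₂ ≥ 0`
nondecreasing on `[0, α]`, all integrable, and `∫₀^α g₁ = ∫₀^α g₂`, then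
`∫ f₁(g₁ − g₂) ≥ 0`, `∫ f₂(g₁ − g₂) ≤ 0`, and `∫f₁g₁·∫f₂g₂ ≥ ∫f₁g₂·∫f₂g₁`. -/
theorem chebyshev_type_inequality (α : ℝ) (hα : 0 < α) (f₁ f₂ g₁ g₂ : ℝ → ℝ)
    (hf₁i : IntervalIntegrable f₁ volume 0 α) (hf₂i : IntervalIntegrable f₂ volume 0 α)
    (hg₁i : IntervalIntegrable g₁ volume 0 α) (hg₂i : IntervalIntegrable g₂ volume 0 α)
    (hf₁0 : ∀ x ∈ Set.Icc 0 α, 0 ≤ f₁ x) (hf₂0 : ∀ x ∈ Set.Icc 0 α, 0 ≤ f₂ x)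
    (hg₁0 : ∀ x ∈ Set.Icc 0 α, 0 ≤ g₁ x) (hg₂0 : ∀ x ∈ Set.Icc 0 α, 0 ≤ g₂ x)
    (hf₁m : AntitoneOn f₁ (Set.Icc 0 α)) (hf₂m : MonotoneOn f₂ (Set.Icc 0 α))
    (hg₁m : AntitoneOn g₁ (Set.Icc 0 α)) (hg₂m : MonotoneOn g₂ (Set.Icc 0 α))
    (heq : ∫ x in (0:ℝ)..α, g₁ x = ∫ x in (0:ℝ)..α, g₂ x) :
    0 ≤ (∫ x in (0:ℝ)..α, f₁ x * (g₁ x - g₂ x)) ∧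
      (∫ x in (0:ℝ)..α, f₂ x * (g₁ x - g₂ x)) ≤ 0 ∧
      (∫ x in (0:ℝ)..α, f₁ x * g₂ x) * (∫ x in (0:ℝ)..α, f₂ x * g₁ x) ≤
        (∫ x in (0:ℝ)..α, f₁ x * g₁ x) * (∫ x in (0:ℝ)..α, f₂ x * g₂ x) :=
  chebyshev_type_inequality_general α hα f₁ f₂ g₁ g₂ hf₁0 hf₂0 hg₂0 hf₁m hf₂m hg₁m hg₂m heq
end

section
/- (Monotonicity Lemma.) Fix an integer k ≥ 2. The function γ ↦ E₊(γ)/E₋(γ) is strictly decreasing on (0, π/2), where E∓(γ) = ∫₀^γ √(cos²φ − cos²γ)·cos((1 ∓ 2/k)φ) dφ. Moreover E₊(γ)/E₋(γ) → 1 as γ → 0⁺ and E₊(γ)/E₋(γ) → (k−1)/(k+1) as γ → π/2⁻. -/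
open Filter Topology

/-- The integral `E∓(γ) = ∫₀^γ √(cos²φ − cos²γ)·cos((1 ∓ 2/k)φ) dφ`, where the sign `s = ∓1`
enters as `cos((1 + s·2/k)φ)`. -/
noncomputable def Esgn (k : ℕ) (s : ℝ) (γ : ℝ) : ℝ :=
  ∫ φ in (0:ℝ)..γ, Real.sqrt (Real.cos φ ^ 2 - Real.cos γ ^ 2) *
    Real.cos ((1 + s * (2 / (k : ℝ))) * φ)

open Set intervalIntegral

namespace MonoAux



noncomputable def w (γ φ : ℝ) : ℝ := Real.sqrt (Real.cos φ ^ 2 - Real.cos γ ^ 2)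

lemma w_nonneg (γ φ : ℝ) : 0 ≤ w γ φ := Real.sqrt_nonneg _

lemma continuous_w (γ : ℝ) : Continuous (w γ) := by unfold w; fun_prop

lemma continuous_w_uncurry : Continuous (fun p : ℝ × ℝ => w p.1 p.2) := by unfold w; fun_prop

lemma w_eq_zero {γ φ : ℝ} (h0 : 0 ≤ γ) (h1 : γ ≤ φ) (h2 : φ ≤ Real.pi/2) : w γ φ = 0 := by
  have hπ := Real.pi_pos
  apply Real.sqrt_eq_zero_of_nonpos
  have hφ : 0 ≤ Real.cos φ := Real.cos_nonneg_of_mem_Icc ⟨by linarith, h2⟩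
  have : Real.cos φ ≤ Real.cos γ :=
    Real.cos_le_cos_of_nonneg_of_le_pi h0 (by linarith) h1
  nlinarith

lemma w_pos {γ φ : ℝ} (h0 : 0 ≤ φ) (h1 : φ < γ) (h2 : γ ≤ Real.pi/2) : 0 < w γ φ := by
  have hπ := Real.pi_pos
  apply Real.sqrt_pos.mpr
  have hγ : 0 ≤ Real.cos γ := Real.cos_nonneg_of_mem_Icc ⟨by linarith, h2⟩
  have : Real.cos γ < Real.cos φ :=
    Real.strictAntiOn_cos ⟨h0, by linarith⟩ ⟨by linarith, by linarith⟩ h1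
  nlinarith

lemma integrable_w_cos (γ a u v : ℝ) :
    IntervalIntegrable (fun φ => w γ φ * Real.cos (a*φ)) MeasureTheory.volume u v :=
  ((continuous_w γ).mul (by fun_prop)).intervalIntegrable u v

lemma integral_ext {γ γ' : ℝ} (a : ℝ) (h0 : 0 ≤ γ) (h : γ ≤ γ') (h2 : γ' ≤ Real.pi/2) :
    ∫ φ in (0:ℝ)..γ, w γ φ * Real.cos (a*φ) = ∫ φ in (0:ℝ)..γ', w γ φ * Real.cos (a*φ) := by
  rw [← intervalIntegral.integral_add_adjacent_intervals (integrable_w_cos γ a 0 γ)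
    (integrable_w_cos γ a γ γ')]
  have hz : ∫ φ in γ..γ', w γ φ * Real.cos (a*φ) = 0 := by
    have : ∀ φ ∈ uIcc γ γ', w γ φ * Real.cos (a*φ) = (fun _ => (0:ℝ)) φ := by
      intro φ hφ
      rw [uIcc_of_le h] at hφ
      rw [w_eq_zero h0 hφ.1 (hφ.2.trans h2), zero_mul]
    rw [intervalIntegral.integral_congr this, intervalIntegral.integral_zero]
  rw [hz, add_zero]

lemma B_identity (t x y : ℝ) :
    Real.cos ((1+t)*x) * Real.cos ((1-t)*y) - Real.cos ((1+t)*y) * Real.cos ((1-t)*x)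
      = -(Real.sin (x-y) * Real.sin (t*(x+y)) + Real.sin (x+y) * Real.sin (t*(x-y))) := by
  rw [show (1+t)*x = x + t*x by ring, show (1-t)*y = y - t*y by ring,
    show (1+t)*y = y + t*y by ring, show (1-t)*x = x - t*x by ring,
    show t*(x+y) = t*x + t*y by ring, show t*(x-y) = t*x - t*y by ring]
  simp only [Real.cos_add, Real.cos_sub, Real.sin_add, Real.sin_sub]
  ring





lemma B_nonpos {t x y : ℝ} (ht0 : 0 ≤ t) (ht1 : t ≤ 1) (hy : 0 ≤ y) (hxy : y ≤ x)
    (hx : x ≤ Real.pi/2) :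
    Real.cos ((1+t)*x) * Real.cos ((1-t)*y) ≤ Real.cos ((1+t)*y) * Real.cos ((1-t)*x) := by
  have hπ := Real.pi_pos
  have hs : t*(x+y) ≤ x + y := by nlinarith
  have hs' : t*(x-y) ≤ x - y := by nlinarith
  have h1 : 0 ≤ Real.sin (x-y) := Real.sin_nonneg_of_nonneg_of_le_pi (by linarith) (by linarith)
  have h2 : 0 ≤ Real.sin (t*(x+y)) :=
    Real.sin_nonneg_of_nonneg_of_le_pi (mul_nonneg ht0 (by linarith)) (by linarith)
  have h3 : 0 ≤ Real.sin (x+y) := Real.sin_nonneg_of_nonneg_of_le_pi (by linarith) (by linarith)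
  have h4 : 0 ≤ Real.sin (t*(x-y)) :=
    Real.sin_nonneg_of_nonneg_of_le_pi (by nlinarith) (by linarith)
  nlinarith [B_identity t x y, mul_nonneg h1 h2, mul_nonneg h3 h4]

lemma B_neg {t x y : ℝ} (ht0 : 0 < t) (ht1 : t ≤ 1) (hy : 0 ≤ y) (hxy : y < x)
    (hx : x < Real.pi/2) :
    Real.cos ((1+t)*x) * Real.cos ((1-t)*y) < Real.cos ((1+t)*y) * Real.cos ((1-t)*x) := by
  have hπ := Real.pi_pos
  have hs : t*(x+y) ≤ x + y := by nlinarith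
  have hs' : t*(x-y) ≤ x - y := by nlinarith
  have h1 : 0 < Real.sin (x-y) := Real.sin_pos_of_pos_of_lt_pi (by linarith) (by linarith)
  have h2 : 0 < Real.sin (t*(x+y)) :=
    Real.sin_pos_of_pos_of_lt_pi (mul_pos ht0 (by linarith)) (by linarith)
  have h3 : 0 ≤ Real.sin (x+y) := Real.sin_nonneg_of_nonneg_of_le_pi (by linarith) (by linarith)
  have h4 : 0 ≤ Real.sin (t*(x-y)) :=
    Real.sin_nonneg_of_nonneg_of_le_pi (by nlinarith) (by linarith)
  nlinarith [B_identity t x y, mul_pos h1 h2, mul_nonneg h3 h4]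

lemma sqrt_delta {A B u v : ℝ} (hAB : A ≤ B) (huv : u ≤ v) :
    Real.sqrt (u-B) * Real.sqrt (v-A) ≤ Real.sqrt (u-A) * Real.sqrt (v-B) := by
  rcases le_or_gt u B with h | h
  · rw [Real.sqrt_eq_zero_of_nonpos (by linarith), zero_mul]
    positivity
  · have h1 : 0 ≤ u - B := by linarith
    have h2 : 0 ≤ u - A := by linarith
    rw [← Real.sqrt_mul h1, ← Real.sqrt_mul h2]
    apply Real.sqrt_le_sqrt
    nlinarith


set_option maxHeartbeats 2000000 in
lemma key_ineq {t γ γ' : ℝ} (ht0 : 0 < t) (ht1 : t ≤ 1)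
    (h0 : 0 < γ) (hγγ' : γ < γ') (hγ'2 : γ' < Real.pi/2) :
    (∫ φ in (0:ℝ)..γ', w γ' φ * Real.cos ((1+t)*φ)) * (∫ φ in (0:ℝ)..γ, w γ φ * Real.cos ((1-t)*φ))
      < (∫ φ in (0:ℝ)..γ, w γ φ * Real.cos ((1+t)*φ)) *
        (∫ φ in (0:ℝ)..γ', w γ' φ * Real.cos ((1-t)*φ)) := by
  have hπ := Real.pi_pos
  set f₁ : ℝ → ℝ := fun φ => w γ' φ * Real.cos ((1+t)*φ) with hf₁
  set f₂ : ℝ → ℝ := fun φ => w γ φ * Real.cos ((1-t)*φ) with hf₂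
  set g₁ : ℝ → ℝ := fun φ => w γ φ * Real.cos ((1+t)*φ) with hg₁
  set g₂ : ℝ → ℝ := fun φ => w γ' φ * Real.cos ((1-t)*φ) with hg₂
  have hcf₁ : Continuous f₁ := (continuous_w _).mul (by fun_prop)
  have hcf₂ : Continuous f₂ := (continuous_w _).mul (by fun_prop)
  have hcg₁ : Continuous g₁ := (continuous_w _).mul (by fun_prop)
  have hcg₂ : Continuous g₂ := (continuous_w _).mul (by fun_prop)
  rw [integral_ext (1-t) h0.le hγγ'.le hγ'2.le, integral_ext (1+t) h0.le hγγ'.le hγ'2.le]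
  set I₁ := ∫ φ in (0:ℝ)..γ', f₁ φ with hI₁
  set I₂ := ∫ φ in (0:ℝ)..γ', f₂ φ with hI₂
  set J₁ := ∫ φ in (0:ℝ)..γ', g₁ φ with hJ₁
  set J₂ := ∫ φ in (0:ℝ)..γ', g₂ φ with hJ₂
  -- the symmetrized kernel
  set H : ℝ → ℝ → ℝ :=
    fun φ ψ => f₁ φ * f₂ ψ + f₁ ψ * f₂ φ - (g₁ φ * g₂ ψ + g₁ ψ * g₂ φ) with hH
  have hHcont : Continuous (fun p : ℝ × ℝ => H p.1 p.2) := by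
    rw [hH]
    exact (((hcf₁.comp continuous_fst).mul (hcf₂.comp continuous_snd)).add
        ((hcf₁.comp continuous_snd).mul (hcf₂.comp continuous_fst))).sub
      (((hcg₁.comp continuous_fst).mul (hcg₂.comp continuous_snd)).add
        ((hcg₁.comp continuous_snd).mul (hcg₂.comp continuous_fst)))
  have hHcont1 : ∀ φ, Continuous (fun ψ => H φ ψ) := by
    intro φ
    rw [hH]
    exact ((continuous_const.mul hcf₂).add (hcf₁.mul continuous_const)).sub
      ((continuous_const.mul hcg₂).add (hcg₁.mul continuous_const))
  -- value of the inner integral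
  have inner_eval : ∀ φ, (∫ ψ in (0:ℝ)..γ', H φ ψ)
      = f₁ φ * I₂ + I₁ * f₂ φ - (g₁ φ * J₂ + J₁ * g₂ φ) := by
    intro φ
    have i1 : IntervalIntegrable (fun ψ => f₁ φ * f₂ ψ) MeasureTheory.volume 0 γ' :=
      (continuous_const.mul hcf₂).intervalIntegrable _ _
    have i2 : IntervalIntegrable (fun ψ => f₁ ψ * f₂ φ) MeasureTheory.volume 0 γ' :=
      (hcf₁.mul continuous_const).intervalIntegrable _ _
    have i3 : IntervalIntegrable (fun ψ => g₁ φ * g₂ ψ) MeasureTheory.volume 0 γ' :=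
      (continuous_const.mul hcg₂).intervalIntegrable _ _
    have i4 : IntervalIntegrable (fun ψ => g₁ ψ * g₂ φ) MeasureTheory.volume 0 γ' :=
      (hcg₁.mul continuous_const).intervalIntegrable _ _
    rw [hH]
    rw [intervalIntegral.integral_sub (i1.add i2) (i3.add i4),
      intervalIntegral.integral_add i1 i2, intervalIntegral.integral_add i3 i4,
      intervalIntegral.integral_const_mul, intervalIntegral.integral_mul_const,
      intervalIntegral.integral_const_mul, intervalIntegral.integral_mul_const]
  -- total evaluation
  have total_eval : (∫ φ in (0:ℝ)..γ', ∫ ψ in (0:ℝ)..γ', H φ ψ)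
      = 2*(I₁*I₂) - 2*(J₁*J₂) := by
    have e : (fun φ => ∫ ψ in (0:ℝ)..γ', H φ ψ)
        = fun φ => f₁ φ * I₂ + I₁ * f₂ φ - (g₁ φ * J₂ + J₁ * g₂ φ) := funext inner_eval
    rw [intervalIntegral.integral_congr (g := fun φ => f₁ φ * I₂ + I₁ * f₂ φ - (g₁ φ * J₂ + J₁ * g₂ φ)) (fun φ _ => inner_eval φ)]
    have i1 : IntervalIntegrable (fun φ => f₁ φ * I₂) MeasureTheory.volume 0 γ' :=
      (hcf₁.mul continuous_const).intervalIntegrable _ _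
    have i2 : IntervalIntegrable (fun φ => I₁ * f₂ φ) MeasureTheory.volume 0 γ' :=
      (continuous_const.mul hcf₂).intervalIntegrable _ _
    have i3 : IntervalIntegrable (fun φ => g₁ φ * J₂) MeasureTheory.volume 0 γ' :=
      (hcg₁.mul continuous_const).intervalIntegrable _ _
    have i4 : IntervalIntegrable (fun φ => J₁ * g₂ φ) MeasureTheory.volume 0 γ' :=
      (continuous_const.mul hcg₂).intervalIntegrable _ _
    rw [intervalIntegral.integral_sub (i1.add i2) (i3.add i4),
      intervalIntegral.integral_add i1 i2, intervalIntegral.integral_add i3 i4,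
      intervalIntegral.integral_mul_const, intervalIntegral.integral_const_mul,
      intervalIntegral.integral_mul_const, intervalIntegral.integral_const_mul]
    ring
  have hγ'pos : (0:ℝ) < γ' := lt_trans h0 hγγ'
  have hwmono : Real.cos γ' ^ 2 ≤ Real.cos γ ^ 2 := by
    have h1 : 0 ≤ Real.cos γ' := Real.cos_nonneg_of_mem_Icc ⟨by linarith, hγ'2.le⟩
    have h2 : Real.cos γ' ≤ Real.cos γ :=
      Real.cos_le_cos_of_nonneg_of_le_pi h0.le (by linarith) hγγ'.le
    nlinarith
  have hexp : ∀ φ ψ : ℝ, H φ ψ = (Real.cos ((1+t)*φ) * Real.cos ((1-t)*ψ)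
      - Real.cos ((1+t)*ψ) * Real.cos ((1-t)*φ)) * (w γ' φ * w γ ψ - w γ φ * w γ' ψ) := by
    intro φ ψ
    simp only [hH, hf₁, hf₂, hg₁, hg₂]
    ring
  have Hsign : ∀ φ ∈ Icc (0:ℝ) γ', ∀ ψ ∈ Icc (0:ℝ) γ', H φ ψ ≤ 0 := by
    have main : ∀ φ ∈ Icc (0:ℝ) γ', ∀ ψ ∈ Icc (0:ℝ) γ', ψ ≤ φ → H φ ψ ≤ 0 := by
      intro φ hφ ψ hψ hψφ
      have hB : Real.cos ((1+t)*φ) * Real.cos ((1-t)*ψ)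
          - Real.cos ((1+t)*ψ) * Real.cos ((1-t)*φ) ≤ 0 :=
        sub_nonpos.mpr (B_nonpos ht0.le ht1 hψ.1 hψφ (by linarith [hφ.2]))
      have hD : 0 ≤ w γ' φ * w γ ψ - w γ φ * w γ' ψ := by
        have hc : Real.cos φ ^ 2 ≤ Real.cos ψ ^ 2 := by
          have c1 : 0 ≤ Real.cos φ :=
            Real.cos_nonneg_of_mem_Icc ⟨by linarith [hφ.1], by linarith [hφ.2]⟩
          have c2 : Real.cos φ ≤ Real.cos ψ :=
            Real.cos_le_cos_of_nonneg_of_le_pi hψ.1 (by linarith [hφ.2]) hψφ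
          nlinarith
        have hsd := sqrt_delta (A := Real.cos γ' ^ 2) (B := Real.cos γ ^ 2)
          (u := Real.cos φ ^ 2) (v := Real.cos ψ ^ 2) hwmono hc
        unfold w
        linarith [hsd]
      rw [hexp φ ψ]
      nlinarith [mul_nonneg (neg_nonneg.2 hB) hD]
    intro φ hφ ψ hψ
    rcases le_total ψ φ with h | h
    · exact main φ hφ ψ hψ h
    · have hsymm : H φ ψ = H ψ φ := by simp only [hH]; ring
      rw [hsymm]; exact main ψ hψ φ hφ h
  have Hneg : ∀ φ ∈ Ioo γ γ', ∀ ψ ∈ Ioo (0:ℝ) γ, H φ ψ < 0 := by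
    intro φ hφ ψ hψ
    have hB : Real.cos ((1+t)*φ) * Real.cos ((1-t)*ψ)
        - Real.cos ((1+t)*ψ) * Real.cos ((1-t)*φ) < 0 :=
      sub_neg.mpr (B_neg ht0 ht1 hψ.1.le (by linarith [hψ.2, hφ.1]) (by linarith [hφ.2]))
    have hwz : w γ φ = 0 := w_eq_zero h0.le hφ.1.le (by linarith [hφ.2])
    have hD : 0 < w γ' φ * w γ ψ - w γ φ * w γ' ψ := by
      rw [hwz, zero_mul, sub_zero]
      exact mul_pos (w_pos (by linarith [hφ.1]) hφ.2 hγ'2.le)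
        (w_pos hψ.1.le hψ.2 (by linarith))
    rw [hexp φ ψ]
    exact mul_neg_of_neg_of_pos hB hD
  set F : ℝ → ℝ := fun φ => ∫ ψ in (0:ℝ)..γ', H φ ψ with hF
  have hFcont : Continuous F := by
    rw [hF]
    exact intervalIntegral.continuous_parametric_intervalIntegral_of_continuous'
      (f := H) (μ := MeasureTheory.volume) (by exact hHcont) 0 γ'
  have hFnonpos : ∀ φ ∈ Icc (0:ℝ) γ', F φ ≤ 0 := by
    intro φ hφ
    have h := intervalIntegral.integral_nonneg (f := fun ψ => -(H φ ψ))
      (μ := MeasureTheory.volume) hγ'pos.le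
      (fun ψ hψ => neg_nonneg.mpr (Hsign φ hφ ψ hψ))
    rw [intervalIntegral.integral_neg] at h
    rw [hF]; linarith
  have hFneg : ∀ φ ∈ Ioo γ γ', F φ < 0 := by
    intro φ hφ
    have hφmem : φ ∈ Icc (0:ℝ) γ' := ⟨by linarith [hφ.1], hφ.2.le⟩
    have hsplit : F φ = (∫ ψ in (0:ℝ)..γ, H φ ψ) + ∫ ψ in γ..γ', H φ ψ := by
      rw [hF]
      exact (intervalIntegral.integral_add_adjacent_intervals
        ((hHcont1 φ).intervalIntegrable _ _) ((hHcont1 φ).intervalIntegrable _ _)).symm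
    have h1 : (∫ ψ in (0:ℝ)..γ, H φ ψ) < 0 := by
      have hp := intervalIntegral_pos_of_pos_on (f := fun ψ => -(H φ ψ))
        (((hHcont1 φ).neg).intervalIntegrable _ _)
        (fun ψ hψ => neg_pos.mpr (Hneg φ hφ ψ hψ)) h0
      rw [intervalIntegral.integral_neg] at hp
      linarith
    have h2 : (∫ ψ in γ..γ', H φ ψ) ≤ 0 := by
      have h := intervalIntegral.integral_nonneg (f := fun ψ => -(H φ ψ))
        (μ := MeasureTheory.volume) hγγ'.le
        (fun ψ hψ => neg_nonneg.mpr (Hsign φ hφmem ψ ⟨by linarith [hψ.1], hψ.2⟩))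
      rw [intervalIntegral.integral_neg] at h
      linarith
    rw [hsplit]; linarith
  have htot_neg : (∫ φ in (0:ℝ)..γ', F φ) < 0 := by
    have hsplit : (∫ φ in (0:ℝ)..γ', F φ)
        = (∫ φ in (0:ℝ)..γ, F φ) + ∫ φ in γ..γ', F φ :=
      (intervalIntegral.integral_add_adjacent_intervals
        (hFcont.intervalIntegrable _ _) (hFcont.intervalIntegrable _ _)).symm
    have h1 : (∫ φ in (0:ℝ)..γ, F φ) ≤ 0 := by
      have h := intervalIntegral.integral_nonneg (f := fun φ => -(F φ))
        (μ := MeasureTheory.volume) h0.le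
        (fun φ hφ => neg_nonneg.mpr (hFnonpos φ ⟨hφ.1, by linarith [hφ.2]⟩))
      rw [intervalIntegral.integral_neg] at h
      linarith
    have h2 : (∫ φ in γ..γ', F φ) < 0 := by
      have hp := intervalIntegral_pos_of_pos_on (f := fun φ => -(F φ))
        (hFcont.neg.intervalIntegrable _ _)
        (fun φ hφ => neg_pos.mpr (hFneg φ hφ)) hγγ'
      rw [intervalIntegral.integral_neg] at hp
      linarith
    rw [hsplit]; linarith
  rw [total_eval] at htot_neg
  linarith

lemma E_pos {a γ : ℝ} (ha0 : 0 ≤ a) (ha1 : a ≤ 1) (h0 : 0 < γ) (h2 : γ < Real.pi/2) :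
    0 < ∫ φ in (0:ℝ)..γ, w γ φ * Real.cos (a*φ) := by
  have hπ := Real.pi_pos
  apply intervalIntegral_pos_of_pos_on (integrable_w_cos γ a 0 γ) _ h0
  intro φ hφ
  apply mul_pos (w_pos hφ.1.le hφ.2 h2.le)
  apply Real.cos_pos_of_mem_Ioo
  constructor
  · nlinarith [hφ.1, hφ.2]
  · nlinarith [hφ.1, hφ.2]

end MonoAux

open MonoAux in
lemma esgn_plus (k : ℕ) (γ : ℝ) :
    Esgn k 1 γ = ∫ φ in (0:ℝ)..γ, w γ φ * Real.cos ((1 + 2/(k:ℝ))*φ) := by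
  unfold Esgn w
  norm_num

open MonoAux in
lemma esgn_minus (k : ℕ) (γ : ℝ) :
    Esgn k (-1) γ = ∫ φ in (0:ℝ)..γ, w γ φ * Real.cos ((1 - 2/(k:ℝ))*φ) := by
  unfold Esgn w
  congr 1
  funext φ
  ring_nf

namespace MonoAux

lemma W_pos {γ : ℝ} (h0 : 0 < γ) (h2 : γ < Real.pi/2) :
    0 < ∫ φ in (0:ℝ)..γ, w γ φ := by
  apply intervalIntegral_pos_of_pos_on ((continuous_w γ).intervalIntegrable _ _) _ h0
  exact fun φ hφ => w_pos hφ.1.le hφ.2 h2.le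

lemma E_le_W {a γ : ℝ} (h0 : 0 < γ) :
    (∫ φ in (0:ℝ)..γ, w γ φ * Real.cos (a*φ)) ≤ ∫ φ in (0:ℝ)..γ, w γ φ := by
  apply intervalIntegral.integral_mono_on h0.le (integrable_w_cos γ a 0 γ)
    ((continuous_w γ).intervalIntegrable _ _)
  intro φ _
  exact mul_le_of_le_one_right (w_nonneg _ _) (Real.cos_le_one _)

lemma W_le_E {a γ : ℝ} (ha : 0 ≤ a) (h0 : 0 < γ) (hπ : a*γ ≤ Real.pi) :
    Real.cos (a*γ) * (∫ φ in (0:ℝ)..γ, w γ φ)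
      ≤ ∫ φ in (0:ℝ)..γ, w γ φ * Real.cos (a*φ) := by
  have h1 : Real.cos (a*γ) * (∫ φ in (0:ℝ)..γ, w γ φ)
      = ∫ φ in (0:ℝ)..γ, w γ φ * Real.cos (a*γ) := by
    rw [intervalIntegral.integral_mul_const]; ring
  rw [h1]
  apply intervalIntegral.integral_mono_on h0.le
    (((continuous_w γ).mul continuous_const).intervalIntegrable _ _)
    (integrable_w_cos γ a 0 γ)
  intro φ hφ
  apply mul_le_mul_of_nonneg_left _ (w_nonneg _ _)
  exact Real.cos_le_cos_of_nonneg_of_le_pi (by nlinarith [hφ.1]) hπ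
    (by nlinarith [hφ.1, hφ.2])

end MonoAux

namespace MonoAux

lemma integral_cos_mul_cos {a : ℝ} (ha1 : a - 1 ≠ 0) (ha2 : a + 1 ≠ 0) (b : ℝ) :
    ∫ φ in (0:ℝ)..b, Real.cos φ * Real.cos (a*φ)
      = Real.sin ((a+1)*b)/(2*(a+1)) + Real.sin ((a-1)*b)/(2*(a-1)) := by
  have key : ∀ φ : ℝ, HasDerivAt (fun x => Real.sin ((a+1)*x)/(2*(a+1))
      + Real.sin ((a-1)*x)/(2*(a-1))) (Real.cos φ * Real.cos (a*φ)) φ := by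
    intro φ
    have h1 : HasDerivAt (fun x : ℝ => (a+1)*x) (a+1) φ := by
      simpa using (hasDerivAt_id φ).const_mul (a+1)
    have h2 : HasDerivAt (fun x : ℝ => (a-1)*x) (a-1) φ := by
      simpa using (hasDerivAt_id φ).const_mul (a-1)
    have h3 : HasDerivAt (fun x => Real.sin ((a+1)*x)) (Real.cos ((a+1)*φ) * (a+1)) φ :=
      (Real.hasDerivAt_sin ((a+1)*φ)).comp φ h1
    have h4 : HasDerivAt (fun x => Real.sin ((a-1)*x)) (Real.cos ((a-1)*φ) * (a-1)) φ :=
      (Real.hasDerivAt_sin ((a-1)*φ)).comp φ h2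
    have h5 := (h3.div_const (2*(a+1))).add (h4.div_const (2*(a-1)))
    refine h5.congr_deriv ?_
    rw [show (a+1)*φ = a*φ + φ by ring, show (a-1)*φ = a*φ - φ by ring,
      Real.cos_add, Real.cos_sub]
    field_simp
    ring
  rw [intervalIntegral.integral_eq_sub_of_hasDerivAt (fun φ _ => key φ)
    ((Real.continuous_cos.mul (by fun_prop)).intervalIntegrable _ _)]
  simp

lemma esgn_continuous (k : ℕ) (s : ℝ) : Continuous (fun γ => Esgn k s γ) := by
  unfold Esgn
  apply intervalIntegral.continuous_parametric_intervalIntegral_of_continuous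
    (f := fun γ φ => Real.sqrt (Real.cos φ^2 - Real.cos γ^2)
      * Real.cos ((1 + s*(2/(k:ℝ)))*φ)) _ continuous_id
  unfold Function.uncurry
  fun_prop

end MonoAux

namespace MonoAux

lemma esgn_pi_div_two (k : ℕ) (s : ℝ) (h1 : (1 + s*(2/(k:ℝ))) - 1 ≠ 0)
    (h2 : (1 + s*(2/(k:ℝ))) + 1 ≠ 0) :
    Esgn k s (Real.pi/2)
      = Real.sin (((1 + s*(2/(k:ℝ)))+1)*(Real.pi/2))/(2*((1 + s*(2/(k:ℝ)))+1))
      + Real.sin (((1 + s*(2/(k:ℝ)))-1)*(Real.pi/2))/(2*((1 + s*(2/(k:ℝ)))-1)) := by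
  unfold Esgn
  have hπ := Real.pi_pos
  have hcongr : ∀ φ ∈ Set.uIcc (0:ℝ) (Real.pi/2),
      Real.sqrt (Real.cos φ^2 - Real.cos (Real.pi/2)^2) * Real.cos ((1 + s*(2/(k:ℝ)))*φ)
        = Real.cos φ * Real.cos ((1 + s*(2/(k:ℝ)))*φ) := by
    intro φ hφ
    rw [Set.uIcc_of_le (by linarith)] at hφ
    rw [Real.cos_pi_div_two]
    norm_num
    left
    rw [Real.sqrt_sq (Real.cos_nonneg_of_mem_Icc ⟨by linarith [hφ.1], hφ.2⟩)]
  rw [intervalIntegral.integral_congr hcongr, integral_cos_mul_cos h1 h2]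

end MonoAux


set_option maxHeartbeats 1000000 in
open MonoAux in
/-- The Monotonicity Lemma: `γ ↦ E₊(γ)/E₋(γ)` is strictly decreasing on `(0, π/2)`, tends to
`1` as `γ → 0⁺` and to `(k−1)/(k+1)` as `γ → (π/2)⁻`. -/
theorem monotonicity_lemma (k : ℕ) (hk : 2 ≤ k) :
    StrictAntiOn (fun γ => Esgn k 1 γ / Esgn k (-1) γ) (Set.Ioo 0 (Real.pi / 2)) ∧
      Tendsto (fun γ => Esgn k 1 γ / Esgn k (-1) γ) (𝓝[>] 0) (𝓝 1) ∧
      Tendsto (fun γ => Esgn k 1 γ / Esgn k (-1) γ) (𝓝[<] (Real.pi / 2))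
        (𝓝 (((k : ℝ) - 1) / ((k : ℝ) + 1))) := by
  have hπ := Real.pi_pos
  have hK : (2:ℝ) ≤ (k:ℝ) := by exact_mod_cast hk
  have hK0 : (0:ℝ) < (k:ℝ) := by linarith
  have ht0 : 0 < 2/(k:ℝ) := by positivity
  have ht1 : 2/(k:ℝ) ≤ 1 := by rw [div_le_one hK0]; linarith
  refine ⟨?_, ?_, ?_⟩
  · -- strict antitonicity
    intro γ hγ γ' hγ' hlt
    have hEmγ : 0 < Esgn k (-1) γ := by
      rw [esgn_minus]; exact E_pos (by linarith) (by linarith) hγ.1 hγ.2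
    have hEmγ' : 0 < Esgn k (-1) γ' := by
      rw [esgn_minus]; exact E_pos (by linarith) (by linarith) hγ'.1 hγ'.2
    simp only
    rw [div_lt_div_iff₀ hEmγ' hEmγ, esgn_plus, esgn_plus, esgn_minus, esgn_minus]
    exact key_ineq ht0 ht1 hγ.1 hlt hγ'.2
  · -- limit at 0
    have hq : (0:ℝ) < Real.pi/4 := by linarith
    apply tendsto_of_tendsto_of_tendsto_of_le_of_le'
      (g := fun γ => Real.cos ((1+2/(k:ℝ))*γ)) (h := fun γ => 1/Real.cos ((1-2/(k:ℝ))*γ))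
    · have hc : Tendsto (fun γ:ℝ => Real.cos ((1+2/(k:ℝ))*γ)) (𝓝 0) (𝓝 1) := by
        have h := Continuous.tendsto
          (by fun_prop : Continuous (fun γ:ℝ => Real.cos ((1+2/(k:ℝ))*γ))) (0:ℝ)
        simpa using h
      exact hc.mono_left nhdsWithin_le_nhds
    · have h2 : Tendsto (fun γ:ℝ => Real.cos ((1-2/(k:ℝ))*γ)) (𝓝 0) (𝓝 1) := by
        have h := Continuous.tendsto
          (by fun_prop : Continuous (fun γ:ℝ => Real.cos ((1-2/(k:ℝ))*γ))) (0:ℝ)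
        simpa using h
      have hc : Tendsto (fun γ:ℝ => 1/Real.cos ((1-2/(k:ℝ))*γ)) (𝓝 0) (𝓝 1) := by
        simp only [one_div]
        simpa using h2.inv₀ one_ne_zero
      exact hc.mono_left nhdsWithin_le_nhds
    · filter_upwards [Ioo_mem_nhdsGT hq] with γ hγ
      have h0 := hγ.1
      have h4 := hγ.2
      have hγ2 : γ < Real.pi/2 := by linarith
      have hEm : 0 < Esgn k (-1) γ := by
        rw [esgn_minus]; exact E_pos (by linarith) (by linarith) h0 hγ2
      have hW : 0 < ∫ φ in (0:ℝ)..γ, w γ φ := W_pos h0 hγ2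
      have hle : Esgn k (-1) γ ≤ ∫ φ in (0:ℝ)..γ, w γ φ := by
        rw [esgn_minus]; exact E_le_W h0
      have hWle : Real.cos ((1+2/(k:ℝ))*γ) * (∫ φ in (0:ℝ)..γ, w γ φ) ≤ Esgn k 1 γ := by
        rw [esgn_plus]; exact W_le_E (by linarith) h0 (by nlinarith)
      have hcw : 0 ≤ Real.cos ((1+2/(k:ℝ))*γ) :=
        Real.cos_nonneg_of_mem_Icc ⟨by nlinarith, by nlinarith⟩
      have hEp0 : 0 ≤ Esgn k 1 γ := le_trans (mul_nonneg hcw hW.le) hWle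
      have hdd := div_le_div₀ hEp0 hWle hEm hle
      calc Real.cos ((1+2/(k:ℝ))*γ)
          = (Real.cos ((1+2/(k:ℝ))*γ) * (∫ φ in (0:ℝ)..γ, w γ φ))
            / (∫ φ in (0:ℝ)..γ, w γ φ) := by field_simp
        _ ≤ Esgn k 1 γ / Esgn k (-1) γ := hdd
    · filter_upwards [Ioo_mem_nhdsGT hq] with γ hγ
      have h0 := hγ.1
      have h4 := hγ.2
      have hγ2 : γ < Real.pi/2 := by linarith
      have hEm : 0 < Esgn k (-1) γ := by
        rw [esgn_minus]; exact E_pos (by linarith) (by linarith) h0 hγ2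
      have hW : 0 < ∫ φ in (0:ℝ)..γ, w γ φ := W_pos h0 hγ2
      have hcm : 0 < Real.cos ((1-2/(k:ℝ))*γ) := by
        apply Real.cos_pos_of_mem_Ioo
        constructor
        · nlinarith
        · nlinarith
      have hWleE : Real.cos ((1-2/(k:ℝ))*γ) * (∫ φ in (0:ℝ)..γ, w γ φ) ≤ Esgn k (-1) γ := by
        rw [esgn_minus]; exact W_le_E (by linarith) h0 (by nlinarith)
      have hEup : Esgn k 1 γ ≤ ∫ φ in (0:ℝ)..γ, w γ φ := by
        rw [esgn_plus]; exact E_le_W h0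
      calc Esgn k 1 γ / Esgn k (-1) γ
          ≤ (∫ φ in (0:ℝ)..γ, w γ φ)
            / (Real.cos ((1-2/(k:ℝ))*γ) * (∫ φ in (0:ℝ)..γ, w γ φ)) :=
            div_le_div₀ hW.le hEup (mul_pos hcm hW) hWleE
        _ = 1/Real.cos ((1-2/(k:ℝ))*γ) := by
            rw [mul_comm, div_mul_eq_div_div, div_self hW.ne']
  · -- limit at π/2
    have hkne : (k:ℝ) ≠ 0 := hK0.ne'
    have h2mk : (0:ℝ) < 2 - 2/(k:ℝ) := by linarith
    have h2pk : (0:ℝ) < 2 + 2/(k:ℝ) := by linarith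
    have h1p : (1 + 1*(2/(k:ℝ))) - 1 ≠ 0 := by
      have : (1 + 1*(2/(k:ℝ))) - 1 = 2/(k:ℝ) := by ring
      rw [this]; exact ht0.ne'
    have h2p : (1 + 1*(2/(k:ℝ))) + 1 ≠ 0 := by
      have : (1 + 1*(2/(k:ℝ))) + 1 = 2 + 2/(k:ℝ) := by ring
      rw [this]; exact h2pk.ne'
    have h1m : (1 + (-1)*(2/(k:ℝ))) - 1 ≠ 0 := by
      have : (1 + (-1)*(2/(k:ℝ))) - 1 = -(2/(k:ℝ)) := by ring
      rw [this]; exact neg_ne_zero.mpr ht0.ne'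
    have h2m : (1 + (-1)*(2/(k:ℝ))) + 1 ≠ 0 := by
      have : (1 + (-1)*(2/(k:ℝ))) + 1 = 2 - 2/(k:ℝ) := by ring
      rw [this]; exact h2mk.ne'
    have hσ : 0 < Real.sin ((2/(k:ℝ))*(Real.pi/2)) := by
      apply Real.sin_pos_of_pos_of_lt_pi
      · positivity
      · nlinarith
    have hEp' : Esgn k 1 (Real.pi/2)
        = Real.sin ((2/(k:ℝ))*(Real.pi/2)) * (1/(2*(2/(k:ℝ))) - 1/(2*(2+2/(k:ℝ)))) := by
      rw [esgn_pi_div_two k 1 h1p h2p,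
        show ((1 + 1*(2/(k:ℝ)))+1)*(Real.pi/2) = Real.pi + (2/(k:ℝ))*(Real.pi/2) by ring,
        show ((1 + 1*(2/(k:ℝ)))-1)*(Real.pi/2) = (2/(k:ℝ))*(Real.pi/2) by ring,
        Real.sin_add, Real.sin_pi, Real.cos_pi]
      field_simp [hkne, h2pk.ne']
      ring
    have hEm' : Esgn k (-1) (Real.pi/2)
        = Real.sin ((2/(k:ℝ))*(Real.pi/2)) * (1/(2*(2/(k:ℝ))) + 1/(2*(2-2/(k:ℝ)))) := by
      rw [esgn_pi_div_two k (-1) h1m h2m,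
        show ((1 + (-1)*(2/(k:ℝ)))+1)*(Real.pi/2) = Real.pi - (2/(k:ℝ))*(Real.pi/2) by ring,
        show ((1 + (-1)*(2/(k:ℝ)))-1)*(Real.pi/2) = -((2/(k:ℝ))*(Real.pi/2)) by ring,
        Real.sin_pi_sub, Real.sin_neg]
      field_simp [hkne, h2mk.ne']
      have hx : (-1 + (k:ℝ))⁻¹ * (-1 + (k:ℝ)) = 1 := inv_mul_cancel₀ (by intro h; linarith)
      have hy : (-2 + (k:ℝ)*2)⁻¹ * (-2 + (k:ℝ)*2) = 1 := inv_mul_cancel₀ (by intro h; linarith)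
      ring_nf
      linear_combination (-2*Real.sin (Real.pi * (↑k)⁻¹)*(-1 + (k:ℝ))⁻¹) * hy + (4*Real.sin (Real.pi * (↑k)⁻¹)*(-2 + (k:ℝ)*2)⁻¹) * hx
    have hY : 0 < 1/(2*(2/(k:ℝ))) + 1/(2*(2-2/(k:ℝ))) := by positivity
    have hEmpos : 0 < Esgn k (-1) (Real.pi/2) := by
      rw [hEm']; exact mul_pos hσ hY
    have hratio : Esgn k 1 (Real.pi/2) / Esgn k (-1) (Real.pi/2)
        = ((k:ℝ)-1)/((k:ℝ)+1) := by
      rw [hEp', hEm', div_eq_div_iff (mul_pos hσ hY).ne' (by positivity : ((k:ℝ)+1) ≠ 0)]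
      have h1 : (2:ℝ)*(2/(k:ℝ)) = 4/(k:ℝ) := by ring
      have h2 : (2:ℝ)*(2+2/(k:ℝ)) = (4*(k:ℝ)+4)/(k:ℝ) := by
        rw [eq_div_iff hkne]; field_simp; ring
      have h3 : (2:ℝ)*(2-2/(k:ℝ)) = (4*(k:ℝ)-4)/(k:ℝ) := by
        rw [eq_div_iff hkne]; field_simp; ring
      rw [h1, h2, h3, one_div_div, one_div_div, one_div_div]
      have hk4 : (4:ℝ)*(k:ℝ)+4 ≠ 0 := by intro h; nlinarith
      have hk5 : (4:ℝ)*(k:ℝ)-4 ≠ 0 := by intro h; nlinarith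
      field_simp
      have hx : (-1 + (k:ℝ))⁻¹ * (-1 + (k:ℝ)) = 1 := inv_mul_cancel₀ (by intro h; linarith)
      ring_nf
      linear_combination (-Real.sin (Real.pi * (↑k)⁻¹)) * hx
    have htend : Tendsto (fun γ => Esgn k 1 γ / Esgn k (-1) γ) (𝓝[<] (Real.pi/2))
        (𝓝 (Esgn k 1 (Real.pi/2) / Esgn k (-1) (Real.pi/2))) :=
      Tendsto.div (((esgn_continuous k 1).tendsto _).mono_left nhdsWithin_le_nhds)
        (((esgn_continuous k (-1)).tendsto _).mono_left nhdsWithin_le_nhds) hEmpos.ne'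
    rwa [hratio] at htend
end

section
/- Let k ≥ 2 be an integer and let m > 0 satisfy m⁻¹ − m > (k−1)(cot α + tan α) + (tan α − cot α) for some α ∈ (π/4, π/2). Then m < 1, m < cot α, and if additionally k > 2, then m⁻¹ > 2 tan α + cot α. -/
/-!
Write `t = tan α` and `c = cot α = t⁻¹`, so `0 < c < 1 < t`. Since `x ↦ x⁻¹ - x` is strictly
decreasing on `(0, ∞)` and takes the value `t - c` at `c`, the bound `m < c` is equivalent to
`t - c < m⁻¹ - m`, which the hypothesis gives because `(k - 1)(c + t) > 0`. For `k ≥ 3` the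
hypothesis gives `m⁻¹ > m⁻¹ - m > 3t + c`.
-/

open Real Set

lemma strictAntiOn_inv_sub_self {K : Type*} [Field K] [LinearOrder K] [IsStrictOrderedRing K] :
    StrictAntiOn (fun x : K => x⁻¹ - x) (Ioi 0) := fun a ha b hb hab => by
  have := inv_strictAntiOn ha hb hab
  simp only
  linarith

lemma one_lt_tan_of_mem_Ioo {α : ℝ} (hα : α ∈ Ioo (π / 4) (π / 2)) : 1 < tan α := by
  rw [← tan_pi_div_four]
  exact tan_lt_tan_of_nonneg_of_lt_pi_div_two (by positivity) hα.2 hα.1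

/-- If `m > 0` satisfies `m⁻¹ − m > (k−1)(cot α + tan α) + (tan α − cot α)` with
`α ∈ (π/4, π/2)` and `k ≥ 2`, then `m < 1`, `m < cot α`, and for `k > 2` also
`m⁻¹ > 2 tan α + cot α`. -/
theorem parameter_bounds (k : ℕ) (hk : 2 ≤ k) (α : ℝ)
    (hα : α ∈ Set.Ioo (Real.pi / 4) (Real.pi / 2)) (m : ℝ) (hm : 0 < m)
    (h : ((k : ℝ) - 1) * (Real.cot α + Real.tan α) + (Real.tan α - Real.cot α) < m⁻¹ - m) :
    m < 1 ∧ m < Real.cot α ∧ (2 < k → 2 * Real.tan α + Real.cot α < m⁻¹) := by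
  have ht : 1 < tan α := one_lt_tan_of_mem_Ioo hα
  have hct : cot α = (tan α)⁻¹ := by rw [← cot_inv_eq_tan, inv_inv]
  have hc0 : 0 < cot α := hct ▸ inv_pos.2 (by linarith)
  have hc1 : cot α < 1 := hct ▸ inv_lt_one_of_one_lt₀ ht
  have hk1 : (1 : ℝ) ≤ k - 1 := by
    have : (2 : ℝ) ≤ k := by exact_mod_cast hk
    linarith
  have hmc : m < cot α := by
    refine (strictAntiOn_inv_sub_self.lt_iff_gt hc0 hm).1 ?_
    have : 0 < ((k : ℝ) - 1) * (cot α + tan α) := mul_pos (by linarith) (by linarith)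
    simp only [cot_inv_eq_tan]
    linarith
  refine ⟨hmc.trans hc1, hmc, fun hk3 => ?_⟩
  have hk2 : (2 : ℝ) ≤ k - 1 := by
    have : (3 : ℝ) ≤ k := by exact_mod_cast hk3
    linarith
  have : 2 * (cot α + tan α) ≤ ((k : ℝ) - 1) * (cot α + tan α) :=
    mul_le_mul_of_nonneg_right hk2 (by linarith)
  linarith
end
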